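/- (Faithfully flat descent for k-linear categories.) Let i : B → A be a k-linear X-functor from a diagonal k-linear category B to a k-linear category A, and assume A is locally flat as a left B-module, that is, each A_{xy} is flat as a left B_x-module. Then the following are equivalent: (1) A_{xx} is faithfully flat as a left B_x-module for every x ∈ X; (2) the adjoint pair (F, G), with F(N)_{xy} = N_x ⊗_{B_x} A_{xy} (descent map σ_{xy}(n ⊗ a) = n ⊗ 1_x ⊗ a) and G(M)_x = {m ∈ M_{xx} | σ_{xx}(m) = m ⊗_{B_x} 1_x}, is a pair of inverse equivalences between D_k(X)_B and Desc_B(A). -/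

import Mathlib

/-!
Write `δ = σ_{xx} - (- ⊗ 1_x)`, so that `G(M)_x = ker δ`. Flatness of `A_{xy}` identifies
`G(M)_x ⊗_{B_x} A_{xy}` with the kernel of `δ ⊗ A_{xy}`; coassociativity of `σ` puts `σ_{xy}(m)`
in that kernel, and the counit sends its preimage back to `m`. So the counit is bijective as soon
as `A` is locally flat.

If `A_{xx}` is faithfully flat, `- ⊗_{B_x} A_{xx}` reflects injectivity and surjectivity. After
tensoring, the unit `η : N_x → ker δ` becomes the descent map of `F(N)`, which is split by the
multiplication and, on `ker δ`, onto by the contracting homotopy `t ⊗ a ↦ t a`.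
Conversely, the unit at the family concentrated at `x` with value `N` is injective only if
`N ⊗_{B_x} A_{xx} = 0` forces `N = 0`.
-/
open TensorProduct BigOperators
noncomputable section
namespace Paper
variable (k : Type) [CommRing k]

structure KCat (X : Type) where
  M : X → X → Type
  [acg : ∀ x y, AddCommGroup (M x y)]
  [mod : ∀ x y, Module k (M x y)]
  mul : ∀ {x y z : X}, M x y → M y z → M x z
  one : ∀ x : X, M x x
  add_mul : ∀ {x y z : X} (a a' : M x y) (b : M y z), mul (a + a') b = mul a b + mul a' b
  smul_mul : ∀ {x y z : X} (c : k) (a : M x y) (b : M y z), mul (c • a) b = c • mul a b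
  mul_add : ∀ {x y z : X} (a : M x y) (b b' : M y z), mul a (b + b') = mul a b + mul a b'
  mul_smul : ∀ {x y z : X} (c : k) (a : M x y) (b : M y z), mul a (c • b) = c • mul a b
  mul_assoc : ∀ {x y z w : X} (a : M x y) (b : M y z) (c : M z w),
    mul (mul a b) c = mul a (mul b c)
  one_mul : ∀ {x y : X} (a : M x y), mul (one x) a = a
  mul_one : ∀ {x y : X} (a : M x y), mul a (one y) = a
attribute [instance] KCat.acg KCat.mod
variable {k}
def KCat.mulLin {X : Type} (A : KCat k X) (x y z : X) :
    A.M x y →ₗ[k] A.M y z →ₗ[k] A.M x z :=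
  LinearMap.mk₂ k A.mul A.add_mul A.smul_mul A.mul_add A.mul_smul
@[simp] theorem KCat.mulLin_apply {X : Type} (A : KCat k X) (x y z : X)
    (a : A.M x y) (b : A.M y z) : A.mulLin x y z a b = A.mul a b := rfl
variable (k)
def relSub {S M N : Type} [AddCommGroup M] [Module k M] [AddCommGroup N] [Module k N]
    (ρ : M → S → M) (lam : S → N → N) : Submodule k (M ⊗[k] N) :=
  Submodule.span k {t | ∃ m b n, t = ρ m b ⊗ₜ[k] n - m ⊗ₜ[k] lam b n}
abbrev BT {S M N : Type} [AddCommGroup M] [Module k M] [AddCommGroup N] [Module k N]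
    (ρ : M → S → M) (lam : S → N → N) : Type :=
  (M ⊗[k] N) ⧸ relSub k ρ lam
def btmk {S M N : Type} [AddCommGroup M] [Module k M] [AddCommGroup N] [Module k N]
    (ρ : M → S → M) (lam : S → N → N) : M →ₗ[k] N →ₗ[k] BT k ρ lam :=
  (TensorProduct.mk k M N).compr₂ (relSub k ρ lam).mkQ
theorem btmk_rel {S M N : Type} [AddCommGroup M] [Module k M] [AddCommGroup N] [Module k N]
    (ρ : M → S → M) (lam : S → N → N) (m : M) (b : S) (n : N) :
    btmk k ρ lam (ρ m b) n = btmk k ρ lam m (lam b n) := by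
  show (relSub k ρ lam).mkQ _ = (relSub k ρ lam).mkQ _
  rw [Submodule.mkQ_apply, Submodule.mkQ_apply, Submodule.Quotient.eq]
  exact Submodule.subset_span ⟨m, b, n, rfl⟩
def btDesc {S M N P : Type} [AddCommGroup M] [Module k M] [AddCommGroup N] [Module k N]
    [AddCommGroup P] [Module k P]
    (ρ : M → S → M) (lam : S → N → N) (f : M →ₗ[k] N →ₗ[k] P)
    (hf : ∀ m b n, f (ρ m b) n = f m (lam b n)) :
    BT k ρ lam →ₗ[k] P :=
  Submodule.liftQ _ (TensorProduct.lift f) (by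
    rw [relSub, Submodule.span_le]
    rintro t ⟨m, b, n, rfl⟩
    simp [SetLike.mem_coe, LinearMap.mem_ker, map_sub, hf m b n])
@[simp] theorem btDesc_mk {S M N P : Type} [AddCommGroup M] [Module k M] [AddCommGroup N]
    [Module k N] [AddCommGroup P] [Module k P]
    (ρ : M → S → M) (lam : S → N → N) (f : M →ₗ[k] N →ₗ[k] P)
    (hf : ∀ m b n, f (ρ m b) n = f m (lam b n)) (m : M) (n : N) :
    btDesc k ρ lam f hf (btmk k ρ lam m n) = f m n := by
  simp [btDesc, btmk, LinearMap.compr₂_apply, TensorProduct.mk_apply]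

/-- A diagonal `k`-linear category: a family of (not necessarily commutative,
associative, unital) `k`-algebras indexed by `X`. -/
structure DiagAlg (X : Type) where
  C : X → Type
  [acg : ∀ x, AddCommGroup (C x)]
  [mod : ∀ x, Module k (C x)]
  mul : ∀ {x : X}, C x → C x → C x
  one : ∀ x : X, C x
  add_mul : ∀ {x : X} (a a' b : C x), mul (a + a') b = mul a b + mul a' b
  smul_mul : ∀ {x : X} (c : k) (a b : C x), mul (c • a) b = c • mul a b
  mul_add : ∀ {x : X} (a b b' : C x), mul a (b + b') = mul a b + mul a b'
  mul_smul : ∀ {x : X} (c : k) (a b : C x), mul a (c • b) = c • mul a b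
  mul_assoc : ∀ {x : X} (a b c : C x), mul (mul a b) c = mul a (mul b c)
  one_mul : ∀ {x : X} (a : C x), mul (one x) a = a
  mul_one : ∀ {x : X} (a : C x), mul a (one x) = a

attribute [instance] DiagAlg.acg DiagAlg.mod

variable {k}

/-- A `k`-linear `X`-functor from a diagonal category `B` to `A`: a family of
`k`-algebra maps `i x : B x → A x x`. -/
structure XFun {X : Type} (B : DiagAlg k X) (A : KCat k X) where
  i : ∀ x, B.C x →ₗ[k] A.M x x
  i_mul : ∀ x (b b' : B.C x), i x (B.mul b b') = A.mul (i x b) (i x b')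
  i_one : ∀ x, i x (B.one x) = A.one x

/-- A family of right `B_x`-modules (an object of `D_k(X)` with right `B`-action). -/
structure DModData {X : Type} (B : DiagAlg k X) where
  N : X → Type
  [acg : ∀ x, AddCommGroup (N x)]
  [mod : ∀ x, Module k (N x)]
  ract : ∀ {x : X}, N x → B.C x → N x

attribute [instance] DModData.acg DModData.mod

/-- The axioms making `Nd` an object of `D_k(X)_B`. -/
structure IsDMod {X : Type} {B : DiagAlg k X} (Nd : DModData B) : Prop where
  add_ract : ∀ {x : X} (n n' : Nd.N x) (b : B.C x), Nd.ract (n + n') b = Nd.ract n b + Nd.ract n' b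
  ract_add : ∀ {x : X} (n : Nd.N x) (b b' : B.C x), Nd.ract n (b + b') = Nd.ract n b + Nd.ract n b'
  smul_ract : ∀ {x : X} (c : k) (n : Nd.N x) (b : B.C x), Nd.ract (c • n) b = c • Nd.ract n b
  ract_smul : ∀ {x : X} (c : k) (n : Nd.N x) (b : B.C x), Nd.ract n (c • b) = c • Nd.ract n b
  ract_assoc : ∀ {x : X} (n : Nd.N x) (b b' : B.C x),
    Nd.ract (Nd.ract n b) b' = Nd.ract n (B.mul b b')
  ract_one : ∀ {x : X} (n : Nd.N x), Nd.ract n (B.one x) = n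

/-- Morphisms in `D_k(X)_B`. -/
structure IsDModHom {X : Type} {B : DiagAlg k X} (Nd Nd' : DModData B)
    (g : ∀ x, Nd.N x → Nd'.N x) : Prop where
  map_add : ∀ x (n n' : Nd.N x), g x (n + n') = g x n + g x n'
  map_smul : ∀ x (c : k) (n : Nd.N x), g x (c • n) = c • g x n
  map_ract : ∀ x (n : Nd.N x) (b : B.C x), g x (Nd.ract n b) = Nd'.ract (g x n) b

/-- A right module (in `M_k(X)`) over the `k`-linear category `A` (data only). -/
structure RModData {X : Type} (A : KCat k X) where
  M : X → X → Type
  [acg : ∀ x y, AddCommGroup (M x y)]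
  [mod : ∀ x y, Module k (M x y)]
  act : ∀ {x y z : X}, M x y → A.M y z → M x z

attribute [instance] RModData.acg RModData.mod

/-- The axioms of a right `A`-module. -/
structure IsRMod {X : Type} {A : KCat k X} (Md : RModData A) : Prop where
  add_act : ∀ {x y z : X} (m m' : Md.M x y) (a : A.M y z), Md.act (m + m') a = Md.act m a + Md.act m' a
  act_add : ∀ {x y z : X} (m : Md.M x y) (a a' : A.M y z), Md.act m (a + a') = Md.act m a + Md.act m a'
  smul_act : ∀ {x y z : X} (c : k) (m : Md.M x y) (a : A.M y z), Md.act (c • m) a = c • Md.act m a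
  act_smul : ∀ {x y z : X} (c : k) (m : Md.M x y) (a : A.M y z), Md.act m (c • a) = c • Md.act m a
  act_assoc : ∀ {x y z w : X} (m : Md.M x y) (a : A.M y z) (b : A.M z w),
    Md.act (Md.act m a) b = Md.act m (A.mul a b)
  act_one : ∀ {x y : X} (m : Md.M x y), Md.act m (A.one y) = m

/-- Morphisms of right `A`-modules. -/
structure IsRModHom {X : Type} {A : KCat k X} (Md Md' : RModData A)
    (f : ∀ x y, Md.M x y → Md'.M x y) : Prop where
  map_add : ∀ x y (m m' : Md.M x y), f x y (m + m') = f x y m + f x y m'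
  map_smul : ∀ x y (c : k) (m : Md.M x y), f x y (c • m) = c • f x y m
  map_act : ∀ x y z (m : Md.M x y) (a : A.M y z), f x z (Md.act m a) = Md'.act (f x y m) a

section Descent

variable {X : Type} (A : KCat k X) (B : DiagAlg k X) (F : XFun B A)

/-- `M_{xx} ⊗_{B_x} A_{xy}`, for a right `A`-module `M`, where `B` acts via `i = F.i`. -/
abbrev DTc (Md : RModData A) (x y : X) : Type :=
  BT k (fun (m : Md.M x x) (b : B.C x) => Md.act m (F.i x b))
       (fun (b : B.C x) (a : A.M x y) => A.mul (F.i x b) a)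

abbrev dtmk (Md : RModData A) (x y : X) :
    Md.M x x →ₗ[k] A.M x y →ₗ[k] DTc A B F Md x y :=
  btmk k _ _

/-- Right multiplication by `a : A_{yz}` on the second factor of `M_{xx} ⊗_{B_x} A_{xy}`. -/
def dtRmul (Md : RModData A) {x y z : X} (a : A.M y z) :
    DTc A B F Md x y →ₗ[k] DTc A B F Md x z :=
  btDesc k _ _ ((dtmk A B F Md x z).compl₂ ((A.mulLin x y z).flip a)) (by
    intro m b a'
    simp only [LinearMap.compl₂_apply, LinearMap.flip_apply, KCat.mulLin_apply]
    rw [A.mul_assoc]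
    exact btmk_rel k _ _ m b (A.mul a' a))

@[simp] theorem dtRmul_mk (Md : RModData A) {x y z : X} (a : A.M y z)
    (m : Md.M x x) (a' : A.M x y) :
    dtRmul A B F Md a (dtmk A B F Md x y m a') = dtmk A B F Md x z m (A.mul a' a) := by
  simp [dtRmul]

/-- `(M_{xx} ⊗_{B_x} A_{xx}) ⊗_{B_x} A_{xy}`. -/
abbrev DT2c (Md : RModData A) (x y : X) : Type :=
  BT k (fun (t : DTc A B F Md x x) (b : B.C x) => dtRmul A B F Md (F.i x b) t)
       (fun (b : B.C x) (a : A.M x y) => A.mul (F.i x b) a)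

abbrev dt2mk (Md : RModData A) (x y : X) :
    DTc A B F Md x x →ₗ[k] A.M x y →ₗ[k] DT2c A B F Md x y :=
  btmk k _ _

/-- A descent datum: a right `A`-module together with the maps `σ_{xy}`. -/
structure DescData where
  Md : RModData A
  sig : ∀ (x y : X), Md.M x y → DTc A B F Md x y

/-- The axioms of a descent datum.  The conditions `c2` and `c3` are expressed via
(arbitrary) representatives `σ_{xy}(m) = ∑ⱼ m0 j ⊗ m1 j` of the element `σ_{xy}(m)`
of the balanced tensor product. -/
structure IsDesc (D : DescData A B F) : Prop where
  mod : IsRMod D.Md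
  sig_add : ∀ x y (m m' : D.Md.M x y), D.sig x y (m + m') = D.sig x y m + D.sig x y m'
  sig_smul : ∀ x y (c : k) (m : D.Md.M x y), D.sig x y (c • m) = c • D.sig x y m
  c1 : ∀ x y z (m : D.Md.M x y) (a : A.M y z),
    D.sig x z (D.Md.act m a) = dtRmul A B F D.Md a (D.sig x y m)
  c2 : ∀ x y (m : D.Md.M x y) (n : ℕ) (m0 : Fin n → D.Md.M x x) (m1 : Fin n → A.M x y),
    D.sig x y m = ∑ j, dtmk A B F D.Md x y (m0 j) (m1 j) →
    ∑ j, dt2mk A B F D.Md x y (D.sig x x (m0 j)) (m1 j)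
      = ∑ j, dt2mk A B F D.Md x y (dtmk A B F D.Md x x (m0 j) (A.one x)) (m1 j)
  c3 : ∀ x y (m : D.Md.M x y) (n : ℕ) (m0 : Fin n → D.Md.M x x) (m1 : Fin n → A.M x y),
    D.sig x y m = ∑ j, dtmk A B F D.Md x y (m0 j) (m1 j) →
    ∑ j, D.Md.act (m0 j) (m1 j) = m

/-- Morphisms of descent data. -/
structure IsDescHom (D D' : DescData A B F) (f : ∀ x y, D.Md.M x y → D'.Md.M x y) : Prop where
  mod : IsRModHom D.Md D'.Md f
  compat : ∀ x y (m : D.Md.M x y) (n : ℕ) (m0 : Fin n → D.Md.M x x) (m1 : Fin n → A.M x y),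
    D.sig x y m = ∑ j, dtmk A B F D.Md x y (m0 j) (m1 j) →
    D'.sig x y (f x y m) = ∑ j, dtmk A B F D'.Md x y (f x x (m0 j)) (m1 j)

/-- `G(M)_x = { m ∈ M_{xx} | σ_{xx}(m) = m ⊗ 1_x }`. -/
def Gset (D : DescData A B F) (x : X) : Set (D.Md.M x x) :=
  {m | D.sig x x m = dtmk A B F D.Md x x m (A.one x)}

/-- `N_x ⊗_{B_x} A_{xy}` for a diagonal right `B`-module `N`. -/
abbrev FTc (Nd : DModData B) (x y : X) : Type :=
  BT k (fun (n : Nd.N x) (b : B.C x) => Nd.ract n b)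
       (fun (b : B.C x) (a : A.M x y) => A.mul (F.i x b) a)

abbrev ftmk (Nd : DModData B) (x y : X) :
    Nd.N x →ₗ[k] A.M x y →ₗ[k] FTc A B F Nd x y :=
  btmk k _ _

/-- The right `A`-action `(n ⊗ a)·b := n ⊗ ab` on `F(N)`. -/
def ftRmul (Nd : DModData B) {x y z : X} (a : A.M y z) :
    FTc A B F Nd x y →ₗ[k] FTc A B F Nd x z :=
  btDesc k _ _ ((ftmk A B F Nd x z).compl₂ ((A.mulLin x y z).flip a)) (by
    intro m b a'
    simp only [LinearMap.compl₂_apply, LinearMap.flip_apply, KCat.mulLin_apply]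
    rw [A.mul_assoc]
    exact btmk_rel k _ _ m b (A.mul a' a))

@[simp] theorem ftRmul_mk (Nd : DModData B) {x y z : X} (a : A.M y z)
    (n : Nd.N x) (a' : A.M x y) :
    ftRmul A B F Nd a (ftmk A B F Nd x y n a') = ftmk A B F Nd x z n (A.mul a' a) := by
  simp [ftRmul]

/-- The right `A`-module `F(N)`. -/
def FNMod (Nd : DModData B) : RModData A where
  M := FTc A B F Nd
  act := fun {x y z} t a => ftRmul A B F Nd a t

@[simp] theorem FNMod_act (Nd : DModData B) {x y z : X} (t : FTc A B F Nd x y) (a : A.M y z) :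
    (FNMod A B F Nd).act t a = ftRmul A B F Nd a t := rfl

/-- `n ↦ n ⊗ 1_x` as a linear map `N_x → F(N)_{xx}`. -/
def etaLin (Nd : DModData B) (x : X) : Nd.N x →ₗ[k] FTc A B F Nd x x where
  toFun := fun n => ftmk A B F Nd x x n (A.one x)
  map_add' := by intro n n'; simp [map_add]
  map_smul' := by intro c n; simp [map_smul]

@[simp] theorem etaLin_apply (Nd : DModData B) (x : X) (n : Nd.N x) :
    etaLin A B F Nd x n = ftmk A B F Nd x x n (A.one x) := rfl

/-- The descent map `σ_{xy}(n ⊗ a) = (n ⊗ 1_x) ⊗ a` of `F(N)`. -/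
def FNsig (Nd : DModData B) (x y : X) :
    FTc A B F Nd x y →ₗ[k] DTc A B F (FNMod A B F Nd) x y :=
  btDesc k (fun (n : Nd.N x) (b : B.C x) => Nd.ract n b)
    (fun (b : B.C x) (a : A.M x y) => A.mul (F.i x b) a)
    ((dtmk A B F (FNMod A B F Nd) x y).comp (etaLin A B F Nd x)) (by
    intro n b a
    show (dtmk A B F (FNMod A B F Nd) x y) (ftmk A B F Nd x x (Nd.ract n b) (A.one x)) a
      = (dtmk A B F (FNMod A B F Nd) x y) (ftmk A B F Nd x x n (A.one x)) (A.mul (F.i x b) a)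
    rw [btmk_rel k _ _ n b (A.one x), A.mul_one]
    have h2 := btmk_rel k
      (fun (t : (FNMod A B F Nd).M x x) (b : B.C x) => (FNMod A B F Nd).act t (F.i x b))
      (fun (b : B.C x) (a : A.M x y) => A.mul (F.i x b) a)
      (ftmk A B F Nd x x n (A.one x)) b a
    rw [← h2]
    have h3 : (FNMod A B F Nd).act (ftmk A B F Nd x x n (A.one x)) (F.i x b)
        = ftmk A B F Nd x x n (F.i x b) := by
      show ftRmul A B F Nd (F.i x b) (ftmk A B F Nd x x n (A.one x)) = _
      rw [ftRmul_mk, A.one_mul]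
    rw [h3])

@[simp] theorem FNsig_mk (Nd : DModData B) (x y : X) (n : Nd.N x) (a : A.M x y) :
    FNsig A B F Nd x y (ftmk A B F Nd x y n a)
      = dtmk A B F (FNMod A B F Nd) x y (ftmk A B F Nd x x n (A.one x)) a := rfl

/-- The descent datum `F(N)`. -/
def FNDesc (Nd : DModData B) : DescData A B F where
  Md := FNMod A B F Nd
  sig := fun x y t => FNsig A B F Nd x y t

end Descent

section MapLeft

variable {X : Type}

/-- `g ⊗ id` on balanced tensor products. -/
def btMapLeft {S N N' Q : Type} [AddCommGroup N] [Module k N] [AddCommGroup N'] [Module k N']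
    [AddCommGroup Q] [Module k Q]
    (ρ : N → S → N) (ρ' : N' → S → N') (lam : S → Q → Q)
    (g : N →ₗ[k] N') (hg : ∀ n b, g (ρ n b) = ρ' (g n) b) :
    BT k ρ lam →ₗ[k] BT k ρ' lam :=
  btDesc k ρ lam ((btmk k ρ' lam).comp g) (by
    intro n b q
    simp only [LinearMap.comp_apply, hg]
    exact btmk_rel k ρ' lam (g n) b q)

@[simp] theorem btMapLeft_mk {S N N' Q : Type} [AddCommGroup N] [Module k N] [AddCommGroup N']
    [Module k N'] [AddCommGroup Q] [Module k Q]
    (ρ : N → S → N) (ρ' : N' → S → N') (lam : S → Q → Q)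
    (g : N →ₗ[k] N') (hg : ∀ n b, g (ρ n b) = ρ' (g n) b) (n : N) (q : Q) :
    btMapLeft ρ ρ' lam g hg (btmk k ρ lam n q) = btmk k ρ' lam (g n) q := by
  simp [btMapLeft]

end MapLeft

section Descent2

variable {X : Type} (A : KCat k X) (B : DiagAlg k X) (F : XFun B A)

/-- `F(g) = g ⊗ A` for a morphism `g` of diagonal modules. -/
def FNMap (Nd Nd' : DModData B) (g : ∀ x, Nd.N x →ₗ[k] Nd'.N x)
    (hg : ∀ x (n : Nd.N x) (b : B.C x), g x (Nd.ract n b) = Nd'.ract (g x n) b)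
    (x y : X) : FTc A B F Nd x y →ₗ[k] FTc A B F Nd' x y :=
  btMapLeft _ _ _ (g x) (hg x)

/-- `G(M)_x` as a `k`-submodule of `M_{xx}`. -/
def Gsub (D : DescData A B F) (hD : IsDesc A B F D) (x : X) :
    Submodule k (D.Md.M x x) where
  carrier := Gset A B F D x
  add_mem' := by
    intro a b ha hb
    simp only [Gset, Set.mem_setOf_eq] at *
    rw [hD.sig_add, ha, hb]
    simp [map_add]
  zero_mem' := by
    have h0 : D.sig x x (0 : D.Md.M x x) = 0 := by
      have := hD.sig_smul x x (0 : k) 0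
      simpa using this
    simp only [Gset, Set.mem_setOf_eq, h0, map_zero, LinearMap.zero_apply]
  smul_mem' := by
    intro c m hm
    simp only [Gset, Set.mem_setOf_eq] at *
    rw [hD.sig_smul, hm]
    simp [map_smul]

theorem Gsub_closed (D : DescData A B F) (hD : IsDesc A B F D) (x : X)
    (m : D.Md.M x x) (hm : m ∈ Gsub A B F D hD x) (b : B.C x) :
    D.Md.act m (F.i x b) ∈ Gsub A B F D hD x := by
  have hm' : D.sig x x m = dtmk A B F D.Md x x m (A.one x) := hm
  show D.sig x x (D.Md.act m (F.i x b)) = dtmk A B F D.Md x x (D.Md.act m (F.i x b)) (A.one x)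
  rw [hD.c1, hm', dtRmul_mk, A.one_mul]
  rw [btmk_rel k (fun (m : D.Md.M x x) (b : B.C x) => D.Md.act m (F.i x b))
      (fun (b : B.C x) (a : A.M x x) => A.mul (F.i x b) a) m b (A.one x), A.mul_one]

/-- `G(M)` as a diagonal right `B`-module. -/
def GMod (D : DescData A B F) (hD : IsDesc A B F D) : DModData B where
  N := fun x => ↥(Gsub A B F D hD x)
  ract := fun {x} m b => ⟨D.Md.act m.1 (F.i x b), Gsub_closed A B F D hD x m.1 m.2 b⟩

/-- The counit `ε^M : G(M)_x ⊗_{B_x} A_{xy} → M_{xy}`, `m ⊗ a ↦ ma`. -/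
def epsMap (D : DescData A B F) (hD : IsDesc A B F D) (x y : X) :
    FTc A B F (GMod A B F D hD) x y →ₗ[k] D.Md.M x y :=
  btDesc k
    (fun (m : ↥(Gsub A B F D hD x)) (b : B.C x) =>
      (⟨D.Md.act m.1 (F.i x b), Gsub_closed A B F D hD x m.1 m.2 b⟩ : ↥(Gsub A B F D hD x)))
    (fun (b : B.C x) (a : A.M x y) => A.mul (F.i x b) a)
    (LinearMap.mk₂ k (fun (m : ↥(Gsub A B F D hD x)) (a : A.M x y) => D.Md.act m.1 a)
      (by intro m m' a; exact hD.mod.add_act m.1 m'.1 a)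
      (by intro c m a; exact hD.mod.smul_act c m.1 a)
      (by intro m a a'; exact hD.mod.act_add m.1 a a')
      (by intro c m a; exact hD.mod.act_smul c m.1 a))
    (by intro m b a; exact hD.mod.act_assoc m.1 (F.i x b) a)

@[simp] theorem epsMap_mk (D : DescData A B F) (hD : IsDesc A B F D) (x y : X)
    (m : ↥(Gsub A B F D hD x)) (a : A.M x y) :
    epsMap A B F D hD x y (ftmk A B F (GMod A B F D hD) x y m a) = D.Md.act m.1 a := rfl

/-- The unit `η^N_x : N_x → F(N)_{xx}`, `n ↦ n ⊗ 1_x` (its corestriction to `GF(N)` is the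
unit of the adjunction). -/
def etaMap (Nd : DModData B) (x : X) : Nd.N x → FTc A B F Nd x x :=
  fun n => ftmk A B F Nd x x n (A.one x)

end Descent2

section Flat

variable {X : Type} (B : DiagAlg k X)

/-- The axioms of a right module over the `k`-algebra `B_x`. -/
def IsRModOver (x : X) (N : Type) [AddCommGroup N] [Module k N] (ρ : N → B.C x → N) : Prop :=
  (∀ n n' b, ρ (n + n') b = ρ n b + ρ n' b) ∧
  (∀ n b b', ρ n (b + b') = ρ n b + ρ n b') ∧
  (∀ (c : k) n b, ρ (c • n) b = c • ρ n b) ∧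
  (∀ (c : k) n b, ρ n (c • b) = c • ρ n b) ∧
  (∀ n b b', ρ (ρ n b) b' = ρ n (B.mul b b')) ∧
  (∀ n, ρ n (B.one x) = n)

/-- `Q` (with left `B_x`-action `lam`) is flat as a left `B_x`-module:  `- ⊗_{B_x} Q`
preserves injectivity of morphisms of right `B_x`-modules. -/
def LeftFlat (x : X) (Q : Type) [AddCommGroup Q] [Module k Q] (lam : B.C x → Q → Q) : Prop :=
  ∀ (N N' : Type) [AddCommGroup N] [Module k N] [AddCommGroup N'] [Module k N']
    (ρ : N → B.C x → N) (ρ' : N' → B.C x → N'),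
    IsRModOver B x N ρ → IsRModOver B x N' ρ' →
    ∀ (g : N →ₗ[k] N') (hg : ∀ n b, g (ρ n b) = ρ' (g n) b),
      Function.Injective g → Function.Injective (btMapLeft ρ ρ' lam g hg)

/-- `Q` is faithfully flat as a left `B_x`-module: it is flat, and `N ⊗_{B_x} Q = 0`
forces `N = 0`. -/
def LeftFaithfullyFlat (x : X) (Q : Type) [AddCommGroup Q] [Module k Q]
    (lam : B.C x → Q → Q) : Prop :=
  LeftFlat B x Q lam ∧
  ∀ (N : Type) [AddCommGroup N] [Module k N] (ρ : N → B.C x → N), IsRModOver B x N ρ →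
    (∀ t : BT k ρ lam, t = 0) → ∀ n : N, n = 0

end Flat

section Incl

variable {X : Type} (A : KCat k X) (B : DiagAlg k X) (F : XFun B A)

/-- The inclusion `G(M)_x ⊗_{B_x} A_{xy} → M_{xx} ⊗_{B_x} A_{xy}`. -/
def inclMap (D : DescData A B F) (hD : IsDesc A B F D) (x y : X) :
    FTc A B F (GMod A B F D hD) x y →ₗ[k] DTc A B F D.Md x y :=
  btMapLeft (fun (m : (GMod A B F D hD).N x) (b : B.C x) => (GMod A B F D hD).ract m b)
    (fun (m : D.Md.M x x) (b : B.C x) => D.Md.act m (F.i x b))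
    (fun (b : B.C x) (a : A.M x y) => A.mul (F.i x b) a)
    (Gsub A B F D hD x).subtype (fun n b => rfl)

end Incl


section BalancedTensor

variable {k : Type} [CommRing k] {S M M' M'' N : Type}
  [AddCommGroup M] [Module k M] [AddCommGroup M'] [Module k M'] [AddCommGroup M''] [Module k M'']
  [AddCommGroup N] [Module k N]

theorem bt_eq {P : Type} [AddCommGroup P] [Module k P] {ρ : M → S → M} {lam : S → N → N}
    (f g : BT k ρ lam →ₗ[k] P) (h : ∀ m n, f (btmk k ρ lam m n) = g (btmk k ρ lam m n))
    (t : BT k ρ lam) : f t = g t :=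
  DFunLike.congr_fun (Submodule.linearMap_qext _ (TensorProduct.ext' h)) t

theorem bt_repr (ρ : M → S → M) (lam : S → N → N) (t : BT k ρ lam) :
    ∃ (n : ℕ) (m0 : Fin n → M) (m1 : Fin n → N), t = ∑ j, btmk k ρ lam (m0 j) (m1 j) := by
  obtain ⟨s, rfl⟩ := (relSub k ρ lam).mkQ_surjective t
  induction s using TensorProduct.induction_on with
  | zero => exact ⟨0, ![], ![], by simp⟩
  | tmul m n => exact ⟨1, ![m], ![n], by simp [btmk]⟩
  | add s₁ s₂ ih₁ ih₂ =>
    obtain ⟨n₁, a₁, b₁, h₁⟩ := ih₁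
    obtain ⟨n₂, a₂, b₂, h₂⟩ := ih₂
    refine ⟨n₁ + n₂, Fin.append a₁ a₂, Fin.append b₁ b₂, ?_⟩
    rw [map_add, h₁, h₂, Fin.sum_univ_add]
    simp

theorem bt_mem_of_btmk_mem {ρ : M → S → M} {lam : S → N → N} (P : Submodule k (BT k ρ lam))
    (h : ∀ m n, btmk k ρ lam m n ∈ P) (t : BT k ρ lam) : t ∈ P := by
  obtain ⟨n, m0, m1, rfl⟩ := bt_repr ρ lam t
  exact P.sum_mem fun j _ => h (m0 j) (m1 j)

theorem bt_eq_zero_of_btmk_eq_zero {ρ : M → S → M} {lam : S → N → N}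
    (h : ∀ m n, btmk k ρ lam m n = 0) (t : BT k ρ lam) : t = 0 :=
  bt_mem_of_btmk_mem ⊥ (fun m n => (h m n).symm ▸ Submodule.zero_mem ⊥) t

theorem btMapLeft_btMapLeft {ρ : M → S → M} {ρ' : M' → S → M'} {ρ'' : M'' → S → M''}
    (lam : S → N → N) {g : M →ₗ[k] M'} {g' : M' →ₗ[k] M''} {g'' : M →ₗ[k] M''}
    (hg : ∀ m b, g (ρ m b) = ρ' (g m) b) (hg' : ∀ m b, g' (ρ' m b) = ρ'' (g' m) b)
    (hg'' : ∀ m b, g'' (ρ m b) = ρ'' (g'' m) b) (h : ∀ m, g' (g m) = g'' m)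
    (t : BT k ρ lam) :
    btMapLeft ρ' ρ'' lam g' hg' (btMapLeft ρ ρ' lam g hg t) = btMapLeft ρ ρ'' lam g'' hg'' t :=
  bt_eq ((btMapLeft ρ' ρ'' lam g' hg').comp (btMapLeft ρ ρ' lam g hg)) _
    (fun m n => by rw [LinearMap.comp_apply, btMapLeft_mk, btMapLeft_mk, btMapLeft_mk, h]) t

theorem ker_btMapLeft_mkQ_le_range {ρ : M → S → M} (lam : S → N → N) {p : Submodule k M}
    (ρp : p → S → p) (hρp : ∀ m b, p.subtype (ρp m b) = ρ (p.subtype m) b)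
    (ρq : M ⧸ p → S → M ⧸ p) (hρq : ∀ m b, p.mkQ (ρ m b) = ρq (p.mkQ m) b) :
    LinearMap.ker (btMapLeft ρ ρq lam p.mkQ hρq)
      ≤ LinearMap.range (btMapLeft ρp ρ lam p.subtype hρp) := by
  set R := LinearMap.range (btMapLeft ρp ρ lam p.subtype hρp)
  have hpR : p ≤ LinearMap.ker ((btmk k ρ lam).compr₂ R.mkQ) := fun m hm => by
    ext n
    simp only [LinearMap.compr₂_apply, Submodule.mkQ_apply, LinearMap.zero_apply,
      Submodule.Quotient.mk_eq_zero]
    exact ⟨btmk k ρp lam ⟨m, hm⟩ n, btMapLeft_mk ρp ρ lam p.subtype hρp ⟨m, hm⟩ n⟩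
  let ψ : BT k ρq lam →ₗ[k] BT k ρ lam ⧸ R :=
    btDesc k ρq lam (p.liftQ ((btmk k ρ lam).compr₂ R.mkQ) hpR) fun q b n => by
      obtain ⟨m, rfl⟩ := p.mkQ_surjective q
      rw [← hρq, Submodule.mkQ_apply, Submodule.mkQ_apply, Submodule.liftQ_apply,
        Submodule.liftQ_apply, LinearMap.compr₂_apply, LinearMap.compr₂_apply, btmk_rel]
  have hψ : ∀ t, ψ (btMapLeft ρ ρq lam p.mkQ hρq t) = R.mkQ t :=
    bt_eq (ψ.comp (btMapLeft ρ ρq lam p.mkQ hρq)) R.mkQ fun m n => by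
      rw [LinearMap.comp_apply, btMapLeft_mk, btDesc_mk, Submodule.mkQ_apply,
        Submodule.liftQ_apply, LinearMap.compr₂_apply]
  intro t ht
  rw [LinearMap.mem_ker] at ht
  rw [← Submodule.Quotient.mk_eq_zero, ← Submodule.mkQ_apply, ← hψ, ht, map_zero]

end BalancedTensor

namespace IsRModOver

variable {k X : Type} [CommRing k] {B : DiagAlg k X} {x : X} {N : Type} [AddCommGroup N]
  [Module k N] {ρ : N → B.C x → N} (hρ : IsRModOver B x N ρ)
include hρ

theorem zero_ract (b : B.C x) : ρ 0 b = 0 := by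
  simpa using hρ.2.2.1 0 0 b

def actLin (b : B.C x) : N →ₗ[k] N where
  toFun m := ρ m b
  map_add' m m' := hρ.1 m m' b
  map_smul' c m := hρ.2.2.1 c m b

theorem restrict (p : Submodule k N) (ρp : p → B.C x → p)
    (hρp : ∀ m b, p.subtype (ρp m b) = ρ (p.subtype m) b) : IsRModOver B x p ρp := by
  obtain ⟨h₁, h₂, h₃, h₄, h₅, h₆⟩ := hρ
  simp only [Submodule.subtype_apply] at hρp
  refine ⟨fun n n' b => ?_, fun n b b' => ?_, fun c n b => ?_, fun c n b => ?_,
    fun n b b' => ?_, fun n => ?_⟩ <;> ext <;> simp only [hρp, Submodule.coe_add,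
      Submodule.coe_smul, h₁, h₂, h₃, h₄, h₅, h₆]

def quotAct (p : Submodule k N) (hp : ∀ m ∈ p, ∀ b, ρ m b ∈ p) (q : N ⧸ p) (b : B.C x) :
    N ⧸ p :=
  p.mapQ p (hρ.actLin b) (fun m hm => hp m hm b) q

theorem quotAct_mkQ (p : Submodule k N) (hp : ∀ m ∈ p, ∀ b, ρ m b ∈ p) (m : N) (b : B.C x) :
    hρ.quotAct p hp (p.mkQ m) b = p.mkQ (ρ m b) :=
  Submodule.mapQ_apply _ _ _ m

theorem quot (p : Submodule k N) (hp : ∀ m ∈ p, ∀ b, ρ m b ∈ p) :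
    IsRModOver B x (N ⧸ p) (hρ.quotAct p hp) := by
  have hmk : ∀ m b, hρ.quotAct p hp (Submodule.Quotient.mk m) b
      = Submodule.Quotient.mk (ρ m b) := hρ.quotAct_mkQ p hp
  obtain ⟨h₁, h₂, h₃, h₄, h₅, h₆⟩ := hρ
  refine ⟨fun n n' b => ?_, fun n b b' => ?_, fun c n b => ?_, fun c n b => ?_,
    fun n b b' => ?_, fun n => ?_⟩
  · obtain ⟨m, rfl⟩ := p.mkQ_surjective n
    obtain ⟨m', rfl⟩ := p.mkQ_surjective n'
    simp only [Submodule.mkQ_apply, ← Submodule.Quotient.mk_add, hmk, h₁]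
  all_goals obtain ⟨m, rfl⟩ := p.mkQ_surjective n
  · simp only [Submodule.mkQ_apply, hmk, h₂, Submodule.Quotient.mk_add]
  · simp only [Submodule.mkQ_apply, ← Submodule.Quotient.mk_smul, hmk, h₃]
  · simp only [Submodule.mkQ_apply, hmk, h₄, Submodule.Quotient.mk_smul]
  · simp only [Submodule.mkQ_apply, hmk, h₅]
  · simp only [Submodule.mkQ_apply, hmk, h₆]

end IsRModOver

section FaithfulFlatness

variable {k X : Type} [CommRing k] {B : DiagAlg k X} {x : X} {Q : Type} [AddCommGroup Q]
  [Module k Q] {lam : B.C x → Q → Q} {N N' : Type} [AddCommGroup N] [Module k N]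
  [AddCommGroup N'] [Module k N'] {ρ : N → B.C x → N} {ρ' : N' → B.C x → N'}

theorem LeftFaithfullyFlat.injective_of_btMapLeft_injective (hQ : LeftFaithfullyFlat B x Q lam)
    (hρ : IsRModOver B x N ρ) (hρ' : IsRModOver B x N' ρ') (g : N →ₗ[k] N')
    (hg : ∀ n b, g (ρ n b) = ρ' (g n) b) (hinj : Function.Injective (btMapLeft ρ ρ' lam g hg)) :
    Function.Injective g := by
  have hK : ∀ m ∈ LinearMap.ker g, ∀ b, ρ m b ∈ LinearMap.ker g := fun m hm b => by
    rw [LinearMap.mem_ker] at hm ⊢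
    rw [hg, hm, hρ'.zero_ract]
  obtain ⟨ρK, hρK⟩ : ∃ ρK : LinearMap.ker g → B.C x → LinearMap.ker g,
      ∀ m b, (LinearMap.ker g).subtype (ρK m b) = ρ ((LinearMap.ker g).subtype m) b :=
    ⟨fun m b => ⟨ρ m b, hK m m.2 b⟩, fun _ _ => rfl⟩
  have hKρ := hρ.restrict _ ρK hρK
  have hι := hQ.1 _ _ _ _ hKρ hρ (LinearMap.ker g).subtype hρK Subtype.val_injective
  have hzero := bt_eq_zero_of_btmk_eq_zero (k := k) (ρ := ρK) (lam := lam) fun m q =>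
    hι <| hinj <| by
      rw [btMapLeft_mk, btMapLeft_mk, map_zero, map_zero, Submodule.subtype_apply,
        LinearMap.mem_ker.mp m.2, map_zero, LinearMap.zero_apply]
  rw [← LinearMap.ker_eq_bot, eq_bot_iff]
  intro m hm
  exact congrArg Subtype.val (hQ.2 _ _ hKρ hzero ⟨m, hm⟩)

theorem LeftFaithfullyFlat.surjective_of_btMapLeft_surjective (hQ : LeftFaithfullyFlat B x Q lam)
    (hρ' : IsRModOver B x N' ρ') (g : N →ₗ[k] N') (hg : ∀ n b, g (ρ n b) = ρ' (g n) b)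
    (hsurj : Function.Surjective (btMapLeft ρ ρ' lam g hg)) : Function.Surjective g := by
  have hp : ∀ m ∈ LinearMap.range g, ∀ b, ρ' m b ∈ LinearMap.range g := by
    rintro _ ⟨n, rfl⟩ b
    exact ⟨ρ n b, hg n b⟩
  have hπ := hρ'.quotAct_mkQ _ hp
  have hzero := bt_eq_zero_of_btmk_eq_zero (k := k) (ρ := hρ'.quotAct _ hp) (lam := lam)
    fun q a => by
      obtain ⟨m, rfl⟩ := (LinearMap.range g).mkQ_surjective q
      obtain ⟨s, hs⟩ := hsurj (btmk k ρ' lam m a)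
      rw [← btMapLeft_mk ρ' _ lam _ (fun m b => (hπ m b).symm), ← hs]
      refine bt_eq ((btMapLeft ρ' _ lam _ (fun m b => (hπ m b).symm)).comp
        (btMapLeft ρ ρ' lam g hg)) 0 (fun n a => ?_) s
      rw [LinearMap.comp_apply, btMapLeft_mk, btMapLeft_mk, Submodule.mkQ_apply,
        (Submodule.Quotient.mk_eq_zero _).mpr (LinearMap.mem_range_self g n), map_zero,
        LinearMap.zero_apply, LinearMap.zero_apply]
  intro m
  have := hQ.2 _ _ (hρ'.quot _ hp) hzero ((LinearMap.range g).mkQ m)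
  rwa [Submodule.mkQ_apply, Submodule.Quotient.mk_eq_zero] at this

end FaithfulFlatness

section RightModules

variable {k X : Type} [CommRing k] {A : KCat k X} {B : DiagAlg k X} (F : XFun B A)

theorem ftRmul_add (Nd : DModData B) {x y z : X} (a a' : A.M y z) (t : FTc A B F Nd x y) :
    ftRmul A B F Nd (a + a') t = ftRmul A B F Nd a t + ftRmul A B F Nd a' t :=
  bt_eq (ftRmul A B F Nd (a + a')) (ftRmul A B F Nd a + ftRmul A B F Nd a')
    (fun n c => by simp [A.mul_add]) t

theorem ftRmul_smul (Nd : DModData B) {x y z : X} (c : k) (a : A.M y z) (t : FTc A B F Nd x y) :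
    ftRmul A B F Nd (c • a) t = c • ftRmul A B F Nd a t :=
  bt_eq (ftRmul A B F Nd (c • a)) (c • ftRmul A B F Nd a) (fun n c' => by simp [A.mul_smul]) t

theorem ftRmul_ftRmul (Nd : DModData B) {x y z w : X} (a : A.M y z) (a' : A.M z w)
    (t : FTc A B F Nd x y) :
    ftRmul A B F Nd a' (ftRmul A B F Nd a t) = ftRmul A B F Nd (A.mul a a') t :=
  bt_eq ((ftRmul A B F Nd a').comp (ftRmul A B F Nd a)) (ftRmul A B F Nd (A.mul a a'))
    (fun n c => by simp [A.mul_assoc]) t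

theorem ftRmul_one (Nd : DModData B) {x y : X} (t : FTc A B F Nd x y) :
    ftRmul A B F Nd (A.one y) t = t :=
  bt_eq (ftRmul A B F Nd (A.one y)) LinearMap.id (fun n c => by simp [A.mul_one]) t

theorem dtRmul_add (Md : RModData A) {x y z : X} (a a' : A.M y z) (t : DTc A B F Md x y) :
    dtRmul A B F Md (a + a') t = dtRmul A B F Md a t + dtRmul A B F Md a' t :=
  bt_eq (dtRmul A B F Md (a + a')) (dtRmul A B F Md a + dtRmul A B F Md a')
    (fun n c => by simp [A.mul_add]) t

theorem dtRmul_smul (Md : RModData A) {x y z : X} (c : k) (a : A.M y z) (t : DTc A B F Md x y) :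
    dtRmul A B F Md (c • a) t = c • dtRmul A B F Md a t :=
  bt_eq (dtRmul A B F Md (c • a)) (c • dtRmul A B F Md a) (fun n c' => by simp [A.mul_smul]) t

theorem dtRmul_dtRmul (Md : RModData A) {x y z w : X} (a : A.M y z) (a' : A.M z w)
    (t : DTc A B F Md x y) :
    dtRmul A B F Md a' (dtRmul A B F Md a t) = dtRmul A B F Md (A.mul a a') t :=
  bt_eq ((dtRmul A B F Md a').comp (dtRmul A B F Md a)) (dtRmul A B F Md (A.mul a a'))
    (fun n c => by simp [A.mul_assoc]) t

theorem dtRmul_one (Md : RModData A) {x y : X} (t : DTc A B F Md x y) :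
    dtRmul A B F Md (A.one y) t = t :=
  bt_eq (dtRmul A B F Md (A.one y)) LinearMap.id (fun n c => by simp [A.mul_one]) t

theorem dtmk_act (Md : RModData A) {x y : X} (m : Md.M x x) (b : B.C x) (a : A.M x y) :
    dtmk A B F Md x y (Md.act m (F.i x b)) a = dtmk A B F Md x y m (A.mul (F.i x b) a) :=
  btmk_rel k _ _ m b a

theorem ftmk_ract (Nd : DModData B) {x y : X} (n : Nd.N x) (b : B.C x) (a : A.M x y) :
    ftmk A B F Nd x y (Nd.ract n b) a = ftmk A B F Nd x y n (A.mul (F.i x b) a) :=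
  btmk_rel k _ _ n b a

theorem isRMod_FNMod (Nd : DModData B) : IsRMod (FNMod A B F Nd) where
  add_act t t' _ := map_add _ t t'
  act_add t a a' := ftRmul_add F Nd a a' t
  smul_act c t _ := map_smul _ c t
  act_smul c t a := ftRmul_smul F Nd c a t
  act_assoc t a a' := ftRmul_ftRmul F Nd a a' t
  act_one t := ftRmul_one F Nd t

theorem IsRMod.isRModOver {Md : RModData A} (hM : IsRMod Md) (x : X) :
    IsRModOver B x (Md.M x x) (fun m b => Md.act m (F.i x b)) :=
  ⟨fun n n' _ => hM.add_act n n' _, fun n b b' => by dsimp only; rw [map_add, hM.act_add],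
    fun c n _ => hM.smul_act c n _, fun c n b => by dsimp only; rw [map_smul, hM.act_smul],
    fun n b b' => by dsimp only; rw [hM.act_assoc, F.i_mul], fun n => by dsimp only; rw [F.i_one, hM.act_one]⟩

theorem isRModOver_DTc (Md : RModData A) (x : X) :
    IsRModOver B x (DTc A B F Md x x) (fun t b => dtRmul A B F Md (F.i x b) t) :=
  ⟨fun n n' _ => map_add _ n n', fun n b b' => by dsimp only; rw [map_add, dtRmul_add],
    fun c n _ => map_smul _ c n, fun c n b => by dsimp only; rw [map_smul, dtRmul_smul],
    fun n b b' => by dsimp only; rw [dtRmul_dtRmul, F.i_mul], fun n => by dsimp only; rw [F.i_one, dtRmul_one]⟩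

theorem IsDMod.isRModOver {Nd : DModData B} (hN : IsDMod Nd) (x : X) :
    IsRModOver B x (Nd.N x) (fun n b => Nd.ract n b) :=
  ⟨hN.add_ract, hN.ract_add, hN.smul_ract, hN.ract_smul, hN.ract_assoc, hN.ract_one⟩

def multLin {Md : RModData A} (hM : IsRMod Md) (x y : X) : DTc A B F Md x y →ₗ[k] Md.M x y :=
  btDesc k _ _ (LinearMap.mk₂ k Md.act hM.add_act hM.smul_act hM.act_add hM.act_smul)
    (fun m b a => hM.act_assoc m (F.i x b) a)

@[simp] theorem multLin_mk {Md : RModData A} (hM : IsRMod Md) {x y : X} (m : Md.M x x)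
    (a : A.M x y) : multLin F hM x y (dtmk A B F Md x y m a) = Md.act m a :=
  btDesc_mk k _ _ _ _ m a

end RightModules

section Counit

variable {k X : Type} [CommRing k] {A : KCat k X} {B : DiagAlg k X} {F : XFun B A}
  {D : DescData A B F} (hD : IsDesc A B F D)

def sigLin (x y : X) : D.Md.M x y →ₗ[k] DTc A B F D.Md x y where
  toFun := D.sig x y
  map_add' := hD.sig_add x y
  map_smul' := hD.sig_smul x y

theorem multLin_sig {x y : X} (m : D.Md.M x y) : multLin F hD.mod x y (D.sig x y m) = m := by
  obtain ⟨n, m0, m1, hrep⟩ := bt_repr _ _ (D.sig x y m)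
  rw [hrep, map_sum]
  simp only [multLin_mk]
  exact hD.c3 x y m n m0 m1 hrep

def deltaLin (x : X) : D.Md.M x x →ₗ[k] DTc A B F D.Md x x :=
  sigLin hD x x - (dtmk A B F D.Md x x).flip (A.one x)

theorem deltaLin_apply {x : X} (m : D.Md.M x x) :
    deltaLin hD x m = D.sig x x m - dtmk A B F D.Md x x m (A.one x) := rfl

theorem mem_Gsub_iff {x : X} (m : D.Md.M x x) : m ∈ Gsub A B F D hD x ↔ deltaLin hD x m = 0 :=
  sub_eq_zero.symm

theorem deltaLin_ract {x : X} (m : D.Md.M x x) (b : B.C x) :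
    deltaLin hD x (D.Md.act m (F.i x b)) = dtRmul A B F D.Md (F.i x b) (deltaLin hD x m) := by
  rw [deltaLin_apply, deltaLin_apply, map_sub, hD.c1, dtRmul_mk, A.one_mul, dtmk_act, A.mul_one]

theorem btMapLeft_deltaLin_sig {x y : X} (m : D.Md.M x y) :
    btMapLeft _ (fun t b => dtRmul A B F D.Md (F.i x b) t)
      (fun (b : B.C x) (a : A.M x y) => A.mul (F.i x b) a) (deltaLin hD x) (deltaLin_ract hD)
      (D.sig x y m) = 0 := by
  obtain ⟨n, m0, m1, hrep⟩ := bt_repr _ _ (D.sig x y m)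
  rw [hrep, map_sum]
  simp only [btMapLeft_mk, deltaLin_apply, map_sub, LinearMap.sub_apply]
  rw [Finset.sum_sub_distrib, sub_eq_zero]
  exact hD.c2 x y m n m0 m1 hrep

def deltaBar (x : X) : (D.Md.M x x ⧸ Gsub A B F D hD x) →ₗ[k] DTc A B F D.Md x x :=
  (Gsub A B F D hD x).liftQ (deltaLin hD x) fun m hm => (mem_Gsub_iff hD m).mp hm

theorem deltaBar_injective (x : X) : Function.Injective (deltaBar hD x) := by
  rw [← LinearMap.ker_eq_bot]
  exact Submodule.ker_liftQ_eq_bot _ _ _ fun m hm => (mem_Gsub_iff hD m).mpr hm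

theorem deltaBar_ract {x : X} (q : D.Md.M x x ⧸ Gsub A B F D hD x) (b : B.C x) :
    deltaBar hD x ((hD.mod.isRModOver F x).quotAct _ (Gsub_closed A B F D hD x) q b)
      = dtRmul A B F D.Md (F.i x b) (deltaBar hD x q) := by
  obtain ⟨m, rfl⟩ := (Gsub A B F D hD x).mkQ_surjective q
  rw [IsRModOver.quotAct_mkQ]
  exact deltaLin_ract hD m b

theorem sig_epsMap {x y : X} (s : FTc A B F (GMod A B F D hD) x y) :
    D.sig x y (epsMap A B F D hD x y s) = inclMap A B F D hD x y s :=
  bt_eq ((sigLin hD x y).comp (epsMap A B F D hD x y)) (inclMap A B F D hD x y) (fun m a => by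
    change D.sig x y (D.Md.act m.1 a) = dtmk A B F D.Md x y m.1 a
    rw [hD.c1, m.2, dtRmul_mk, A.one_mul]) s

theorem epsMap_eq_multLin_inclMap {x y : X} (s : FTc A B F (GMod A B F D hD) x y) :
    epsMap A B F D hD x y s = multLin F hD.mod x y (inclMap A B F D hD x y s) :=
  bt_eq (epsMap A B F D hD x y) ((multLin F hD.mod x y).comp (inclMap A B F D hD x y))
    (fun m a => (multLin_mk F hD.mod m.1 a).symm) s

variable {x y : X} (hflat : LeftFlat B x (A.M x y) (fun b a => A.mul (F.i x b) a))
include hflat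

theorem epsMap_injective : Function.Injective (epsMap A B F D hD x y) := by
  have hincl : Function.Injective (inclMap A B F D hD x y) :=
    hflat _ _ _ _ ((hD.mod.isRModOver F x).restrict _ _ fun _ _ => rfl)
      (hD.mod.isRModOver F x) _ _ Subtype.val_injective
  intro s s' h
  apply hincl
  rw [← sig_epsMap, ← sig_epsMap, h]

theorem epsMap_surjective : Function.Surjective (epsMap A B F D hD x y) := by
  intro m
  have hρ := hD.mod.isRModOver F x
  have hδ : Function.Injective (btMapLeft _ _ (fun (b : B.C x) (a : A.M x y) => A.mul (F.i x b) a)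
      (deltaBar hD x) (deltaBar_ract hD)) :=
    hflat _ _ _ _ (hρ.quot _ (Gsub_closed A B F D hD x)) (isRModOver_DTc F D.Md x) _ _
      (deltaBar_injective hD x)
  have hπ : btMapLeft _ _ _ (Gsub A B F D hD x).mkQ
      (fun m b => (hρ.quotAct_mkQ _ (Gsub_closed A B F D hD x) m b).symm) (D.sig x y m) = 0 :=
    hδ <| by
      rw [btMapLeft_btMapLeft _ _ _ (deltaLin_ract hD) fun _ => rfl, map_zero,
        btMapLeft_deltaLin_sig]
  obtain ⟨s, hs⟩ := ker_btMapLeft_mkQ_le_range _ (GMod A B F D hD).ract (fun _ _ => rfl) _ _ hπ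
  exact ⟨s, (epsMap_eq_multLin_inclMap hD s).trans ((congrArg _ hs).trans (multLin_sig hD m))⟩

end Counit

section Unit

variable {k X : Type} [CommRing k] {A : KCat k X} {B : DiagAlg k X} (F : XFun B A)
  (Nd : DModData B) {x : X}

/-- The kernel of this map is `GF(N)_x`. -/
def FNdelta (x : X) : FTc A B F Nd x x →ₗ[k] DTc A B F (FNMod A B F Nd) x x :=
  -- typed on `FTc` rather than the defeq `(FNMod A B F Nd).M x x`, so that `-` elaborates
  let tensorOne : FTc A B F Nd x x →ₗ[k] DTc A B F (FNMod A B F Nd) x x :=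
    (dtmk A B F (FNMod A B F Nd) x x).flip (A.one x)
  FNsig A B F Nd x x - tensorOne

theorem FNdelta_apply (t : FTc A B F Nd x x) :
    FNdelta F Nd x t = FNsig A B F Nd x x t - dtmk A B F (FNMod A B F Nd) x x t (A.one x) := rfl

theorem etaLin_ract (n : Nd.N x) (b : B.C x) :
    etaLin A B F Nd x (Nd.ract n b) = (FNMod A B F Nd).act (etaLin A B F Nd x n) (F.i x b) := by
  rw [etaLin_apply, etaLin_apply, FNMod_act, ftRmul_mk, A.one_mul, ftmk_ract, A.mul_one]

theorem FNdelta_etaLin (n : Nd.N x) : FNdelta F Nd x (etaLin A B F Nd x n) = 0 := by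
  rw [FNdelta_apply, etaLin_apply, FNsig_mk, sub_self]

theorem isRModOver_FTc (x : X) :
    IsRModOver B x (FTc A B F Nd x x) (fun t b => (FNMod A B F Nd).act t (F.i x b)) :=
  (isRMod_FNMod F Nd).isRModOver F x

theorem FNdelta_ract (t : FTc A B F Nd x x) (b : B.C x) :
    FNdelta F Nd x ((FNMod A B F Nd).act t (F.i x b))
      = dtRmul A B F (FNMod A B F Nd) (F.i x b) (FNdelta F Nd x t) := by
  refine bt_eq ((FNdelta F Nd x).comp (ftRmul A B F Nd (F.i x b)))
    ((dtRmul A B F (FNMod A B F Nd) (F.i x b)).comp (FNdelta F Nd x)) (fun n c => ?_) t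
  rw [LinearMap.comp_apply, LinearMap.comp_apply, ftRmul_mk, FNdelta_apply, FNdelta_apply,
    FNsig_mk, FNsig_mk, map_sub,
    dtRmul_mk A B F (FNMod A B F Nd) (F.i x b) (ftmk A B F Nd x x n (A.one x)) c,
    dtRmul_mk A B F (FNMod A B F Nd) (F.i x b) (ftmk A B F Nd x x n c) (A.one x), A.one_mul]
  congr 1
  have := dtmk_act F (FNMod A B F Nd) (ftmk A B F Nd x x n c) b (A.one x)
  rwa [FNMod_act, ftRmul_mk, A.mul_one] at this

theorem dtmk_eq_FNsig_ftRmul_sub {y : X} (t : FTc A B F Nd x x) (a : A.M x y) :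
    dtmk A B F (FNMod A B F Nd) x y t a
      = FNsig A B F Nd x y (ftRmul A B F Nd a t)
        - dtRmul A B F (FNMod A B F Nd) a (FNdelta F Nd x t) := by
  refine bt_eq ((dtmk A B F (FNMod A B F Nd) x y).flip a)
    ((FNsig A B F Nd x y).comp (ftRmul A B F Nd a)
      - (dtRmul A B F (FNMod A B F Nd) a).comp (FNdelta F Nd x)) (fun n c => ?_) t
  change dtmk A B F (FNMod A B F Nd) x y (ftmk A B F Nd x x n c) a = _
  rw [LinearMap.sub_apply, LinearMap.comp_apply, LinearMap.comp_apply,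
    ftRmul_mk, FNsig_mk, FNdelta_apply, FNsig_mk, map_sub,
    dtRmul_mk A B F (FNMod A B F Nd) a (ftmk A B F Nd x x n (A.one x)) c,
    dtRmul_mk A B F (FNMod A B F Nd) a (ftmk A B F Nd x x n c) (A.one x), A.one_mul,
    sub_sub_cancel]

theorem btMapLeft_etaLin {y : X} (w : FTc A B F Nd x y) :
    btMapLeft _ (fun (t : FTc A B F Nd x x) b => (FNMod A B F Nd).act t (F.i x b)) _
      (etaLin A B F Nd x)
      (etaLin_ract F Nd) w = FNsig A B F Nd x y w :=
  bt_eq _ (FNsig A B F Nd x y) (fun _ _ => rfl) w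

theorem multLin_FNsig {y : X} (w : FTc A B F Nd x y) :
    multLin F (isRMod_FNMod F Nd) x y (FNsig A B F Nd x y w) = w :=
  bt_eq ((multLin F (isRMod_FNMod F Nd) x y).comp (FNsig A B F Nd x y)) LinearMap.id
    (fun n a => by
      rw [LinearMap.comp_apply, FNsig_mk,
        multLin_mk F (isRMod_FNMod F Nd) (ftmk A B F Nd x x n (A.one x)) a, FNMod_act, ftRmul_mk,
        A.one_mul]
      rfl) w

variable (hff : LeftFaithfullyFlat B x (A.M x x) (fun b a => A.mul (F.i x b) a))
include hff

theorem etaLin_injective (hN : IsDMod Nd) : Function.Injective (etaLin A B F Nd x) :=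
  hff.injective_of_btMapLeft_injective (hN.isRModOver x) (isRModOver_FTc F Nd x) _
    (etaLin_ract F Nd) fun w w' h => by
      rw [btMapLeft_etaLin, btMapLeft_etaLin] at h
      rw [← multLin_FNsig F Nd w, h, multLin_FNsig]

theorem exists_etaLin_eq {t : FTc A B F Nd x x} (ht : FNdelta F Nd x t = 0) :
    ∃ n, etaLin A B F Nd x n = t := by
  set K := LinearMap.ker (FNdelta F Nd x)
  have hρ := isRModOver_FTc F Nd x
  obtain ⟨ρK, hρK⟩ : ∃ ρK : K → B.C x → K,
      ∀ u b, K.subtype (ρK u b) = (FNMod A B F Nd).act (K.subtype u) (F.i x b) :=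
    ⟨fun u b => ⟨_, (FNdelta_ract F Nd u b).trans (by rw [LinearMap.mem_ker.mp u.2, map_zero])⟩,
      fun _ _ => rfl⟩
  let ηK : Nd.N x →ₗ[k] K := (etaLin A B F Nd x).codRestrict K (FNdelta_etaLin F Nd)
  have hηK : ∀ n b, ηK (Nd.ract n b) = ρK (ηK n) b := fun n b =>
    Subtype.ext ((etaLin_ract F Nd n b).trans (hρK (ηK n) b).symm)
  have hι := hff.1 _ _ _ _ (hρ.restrict K ρK hρK) hρ K.subtype hρK Subtype.val_injective
  have hsurj : Function.Surjective
      (btMapLeft _ ρK (fun (b : B.C x) (a : A.M x x) => A.mul (F.i x b) a) ηK hηK) := by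
    rw [← LinearMap.range_eq_top, eq_top_iff]
    refine fun s _ => bt_mem_of_btmk_mem _
      (fun u a => LinearMap.mem_range.mpr ⟨ftRmul A B F Nd a u.1, hι ?_⟩) s
    have hu := dtmk_eq_FNsig_ftRmul_sub F Nd u.1 a
    rw [LinearMap.mem_ker.mp u.2, map_zero, sub_zero] at hu
    refine (btMapLeft_btMapLeft _ hηK hρK (etaLin_ract F Nd) (fun _ => rfl) _).trans ?_
    rw [btMapLeft_etaLin, ← hu, btMapLeft_mk ρK (fun (t : FTc A B F Nd x x) b =>
      (FNMod A B F Nd).act t (F.i x b)) (fun (b : B.C x) (a : A.M x x) => A.mul (F.i x b) a)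
      K.subtype hρK u a]
    rfl
  obtain ⟨n, hn⟩ := hff.surjective_of_btMapLeft_surjective (hρ.restrict K ρK hρK) ηK hηK hsurj
    ⟨t, ht⟩
  exact ⟨n, congrArg Subtype.val hn⟩

end Unit

section Converse

variable {k X : Type} [CommRing k] {B : DiagAlg k X}

/-- The family with `N` at `x` and `0` elsewhere. -/
def DModData.single (x : X) (N : Type) [AddCommGroup N] [Module k N] (ρ : N → B.C x → N) :
    DModData B where
  N x' := PLift (x' = x) → N
  ract f b h := ρ (f h) (h.down ▸ b)

theorem isDMod_single {x : X} {N : Type} [AddCommGroup N] [Module k N] {ρ : N → B.C x → N}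
    (hρ : IsRModOver B x N ρ) : IsDMod (DModData.single x N ρ) := by
  obtain ⟨h₁, h₂, h₃, h₄, h₅, h₆⟩ := hρ
  constructor <;> intros <;> funext ⟨h⟩ <;> subst h
  exacts [h₁ _ _ _, h₂ _ _ _, h₃ _ _ _, h₄ _ _ _, h₅ _ _ _, h₆ _]

theorem leftFaithfullyFlat_of_etaLin_injective {A : KCat k X} (F : XFun B A) {x : X}
    (hflat : LeftFlat B x (A.M x x) (fun b a => A.mul (F.i x b) a))
    (hinj : ∀ Nd : DModData B, IsDMod Nd → Function.Injective (etaLin A B F Nd x)) :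
    LeftFaithfullyFlat B x (A.M x x) (fun b a => A.mul (F.i x b) a) := by
  refine ⟨hflat, fun N _ _ ρ hρ hzero n => ?_⟩
  let Nd := DModData.single x N ρ
  let c : N →ₗ[k] Nd.N x := LinearMap.pi fun _ => LinearMap.id
  have hc : ∀ m b, c (ρ m b) = Nd.ract (c m) b := fun _ _ => funext fun ⟨_⟩ => rfl
  have hFN : ∀ t : FTc A B F Nd x x, t = 0 :=
    bt_eq_zero_of_btmk_eq_zero fun (f : PLift (x = x) → N) a => by
      have hf : f = c (f ⟨rfl⟩) := funext fun ⟨_⟩ => rfl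
      rw [hf, ← btMapLeft_mk ρ _ _ c hc, hzero (btmk k ρ _ _ a), map_zero]
  have hcn := hinj Nd (isDMod_single hρ) ((hFN _).trans (hFN _).symm :
    etaLin A B F Nd x (c n) = etaLin A B F Nd x 0)
  exact congrFun hcn ⟨rfl⟩

end Converse

/-- Theorem 2.5, faithfully flat descent: if `A` is locally flat as a
left `B`-module, then each `A_{xx}` is faithfully flat as a left `B_x`-module if and only
if the adjoint pair `(F, G)` is a pair of inverse equivalences between `D_k(X)_B` and
`Desc_B(A)` (i.e. all units and all counits are bijective). -/
theorem stmt3 {k X : Type} [CommRing k] (A : KCat k X) (B : DiagAlg k X) (F : XFun B A)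
    (hlocflat : ∀ x y : X,
      LeftFlat B x (A.M x y) (fun (b : B.C x) (a : A.M x y) => A.mul (F.i x b) a)) :
    (∀ x : X, LeftFaithfullyFlat B x (A.M x x)
        (fun (b : B.C x) (a : A.M x x) => A.mul (F.i x b) a))
    ↔
    ((∀ (D : DescData A B F) (hD : IsDesc A B F D) (x y : X),
        Function.Bijective (epsMap A B F D hD x y)) ∧
      (∀ (Nd : DModData B), IsDMod Nd → ∀ x : X,
        Function.Bijective (fun n : Nd.N x =>
          (⟨etaMap A B F Nd x n, rfl⟩ : {t // t ∈ Gset A B F (FNDesc A B F Nd) x})))) := by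
  constructor
  · intro hff
    refine ⟨fun D hD x y => ⟨epsMap_injective hD (hlocflat x y), epsMap_surjective hD (hlocflat x y)⟩,
      fun Nd hN x => ⟨fun n n' h => etaLin_injective F Nd (hff x) hN (congrArg Subtype.val h), ?_⟩⟩
    rintro ⟨t, ht⟩
    obtain ⟨n, hn⟩ := exists_etaLin_eq F Nd (hff x) (sub_eq_zero.mpr ht)
    exact ⟨n, Subtype.ext hn⟩
  · intro hFG x
    exact leftFaithfullyFlat_of_etaLin_injective F (hlocflat x x) fun Nd hN n n' h =>
      (hFG.2 Nd hN x).1 (Subtype.ext h)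

end Paper
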